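/- Let θ be a primitive, pair-aperiodic substitution of constant length r on a finite alphabet 𝒜. If a ≠ b and (a,b) is not an asymptotic disjoint pair, then θ^{|𝒜|²}(a) = θ^{|𝒜|²}(b). -/

import Mathlib

open scoped Classical

noncomputable section

/-- The product topology on `ℤ → A`, where the alphabet `A` carries the discrete topology. -/
abbrev seqTop (A : Type*) : TopologicalSpace (ℤ → A) :=
  @Pi.topologicalSpace ℤ (fun _ => A) (fun _ => ⊥)

/-- The left shift map `σ`. -/
def shiftMap {A : Type*} (x : ℤ → A) : ℤ → A := fun n => x (n + 1)

/-- The shift by `m` steps, i.e. `σ ^ m`. -/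
def shiftBy {A : Type*} (m : ℤ) (x : ℤ → A) : ℤ → A := fun n => x (n + m)

/-- The coordinatewise extension of a letter-to-letter map. -/
def codeMap {A B : Type*} (τ : A → B) : (ℤ → A) → (ℤ → B) := fun x n => τ (x n)

/-- The closure of the two-sided shift orbit of `x`. -/
def orbitClosure {A : Type*} (x : ℤ → A) : Set (ℤ → A) :=
  @closure _ (seqTop A) (Set.range fun m : ℤ => shiftBy m x)

/-- A subshift: a nonempty, closed, shift-invariant subset of `ℤ → A`. -/
def IsSubshift {A : Type*} (X : Set (ℤ → A)) : Prop :=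
  X.Nonempty ∧ @IsClosed _ (seqTop A) X ∧ shiftMap '' X = X

/-- A minimal subshift: every orbit is dense. -/
def IsMinimalSubshift {A : Type*} (X : Set (ℤ → A)) : Prop :=
  IsSubshift X ∧ ∀ x ∈ X, X ⊆ orbitClosure x

/-- `substPow θ r k a j` is the `(j+1)`-st letter of `θ^k(a)`, meaningful for `j < r ^ k`. -/
def substPow {A : Type*} (θ : A → ℕ → A) (r : ℕ) : ℕ → A → ℕ → A
  | 0, a, _ => a
  | k + 1, a, j => θ (substPow θ r k a (j / r)) (j % r)

/-- A substitution of constant length `r` is primitive if for some `k ≥ 1` every letter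
occurs in every `θ^k(a)`. -/
def SubstPrimitive {A : Type*} (θ : A → ℕ → A) (r : ℕ) : Prop :=
  ∃ k, 1 ≤ k ∧ ∀ a a' : A, ∃ j < r ^ k, substPow θ r k a j = a'

/-- The action of `θ^k` on bi-infinite sequences, with the image of `x₀` beginning at
coordinate `0`. -/
def substActPow {A : Type*} (θ : A → ℕ → A) (r k : ℕ) (x : ℤ → A) : ℤ → A :=
  fun n => substPow θ r k (x (Int.fdiv n (r ^ k))) ((Int.fmod n (r ^ k)).toNat)

/-- A bi-infinite `θ`-periodic point. -/
def IsSubstPeriodicPt {A : Type*} (θ : A → ℕ → A) (r : ℕ) (x : ℤ → A) : Prop :=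
  ∃ j, 1 ≤ j ∧ substActPow θ r j x = x

/-- `X` is the substitution shift `X_θ`: the orbit closure of a bi-infinite `θ`-periodic
point. -/
def IsSubstShift {A : Type*} (θ : A → ℕ → A) (r : ℕ) (X : Set (ℤ → A)) : Prop :=
  ∃ x : ℤ → A, IsSubstPeriodicPt θ r x ∧ X = orbitClosure x

/-- An automorphism of the subshift `X`: a self-homeomorphism of `X` commuting with the
shift. -/
def IsAut {A : Type*} (X : Set (ℤ → A)) (Φ : (ℤ → A) → (ℤ → A)) : Prop :=
  Set.BijOn Φ X X ∧ @ContinuousOn _ _ (seqTop A) (seqTop A) Φ X ∧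
    (∀ x ∈ X, Φ (shiftMap x) = shiftMap (Φ x)) ∧
    ∃ Ψ : (ℤ → A) → (ℤ → A), Set.MapsTo Ψ X X ∧
      @ContinuousOn _ _ (seqTop A) (seqTop A) Ψ X ∧ ∀ x ∈ X, Ψ (Φ x) = x

/-- A topological conjugacy between the subshifts `X` and `Y`. -/
def IsConjugacy {A B : Type*} (X : Set (ℤ → A)) (Y : Set (ℤ → B))
    (h : (ℤ → A) → (ℤ → B)) : Prop :=
  Set.BijOn h X Y ∧ @ContinuousOn _ _ (seqTop A) (seqTop B) h X ∧
    (∀ x ∈ X, h (shiftMap x) = shiftMap (h x)) ∧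
    ∃ g : (ℤ → B) → (ℤ → A), Set.MapsTo g Y X ∧
      @ContinuousOn _ _ (seqTop B) (seqTop A) g Y ∧ ∀ x ∈ X, g (h x) = x

/-- `X` and `Y` are topologically conjugate subshifts. -/
def TopConjugate {A B : Type*} (X : Set (ℤ → A)) (Y : Set (ℤ → B)) : Prop :=
  ∃ h, IsConjugacy X Y h

/-- `(P, σ^n)` is a minimal system: `P` is nonempty, `σ^n`-invariant (in both directions)
and every `σ^n`-orbit is dense in `P`. -/
def MinimalUnderPow {A : Type*} (n : ℕ) (P : Set (ℤ → A)) : Prop :=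
  P.Nonempty ∧ (∀ y ∈ P, ∀ m : ℤ, shiftBy ((n : ℤ) * m) y ∈ P) ∧
    ∀ y ∈ P, P ⊆ @closure _ (seqTop A) (Set.range fun m : ℤ => shiftBy ((n : ℤ) * m) y)

/-- A cyclic `σ^n`-minimal partition of `X` with `m` members. -/
def IsCyclicMinPartition {A : Type*} (X : Set (ℤ → A)) (n m : ℕ)
    (P : ZMod m → Set (ℤ → A)) : Prop :=
  0 < m ∧ (∀ i, @IsClosed _ (seqTop A) (P i)) ∧
    (Pairwise fun i j => Disjoint (P i) (P j)) ∧ (⋃ i, P i) = X ∧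
    (∀ i, shiftMap '' P i = P (i + 1)) ∧ ∀ i, MinimalUnderPow n (P i)

/-- `Φ` has `κ`-value zero: it fixes each member of every cyclic `σ^n`-minimal
partition of `X`. -/
def KappaZero {A : Type*} (X : Set (ℤ → A)) (Φ : (ℤ → A) → (ℤ → A)) : Prop :=
  ∀ n : ℕ, 1 ≤ n → ∀ m : ℕ, ∀ P : ZMod m → Set (ℤ → A),
    IsCyclicMinPartition X n m P → ∀ i, Φ '' P i = P i

/-- `(a, b)` is a periodic pair for `θ`. -/
def IsPeriodicPair {A : Type*} (θ : A → ℕ → A) (r : ℕ) (a b : A) : Prop :=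
  a ≠ b ∧ ∃ p, 1 ≤ p ∧ ∃ j < r ^ p, substPow θ r p a j = a ∧ substPow θ r p b j = b

/-- The least period `p(a,b)` of a periodic pair. -/
def pairPeriod {A : Type*} (θ : A → ℕ → A) (r : ℕ) (a b : A) : ℕ :=
  sInf {p | 1 ≤ p ∧ ∃ j < r ^ p, substPow θ r p a j = a ∧ substPow θ r p b j = b}

/-- `p(θ)`: the least common multiple of the periods of the periodic pairs of `θ`
(equal to `1` if there are none). -/
def substPairLcm {A : Type*} [Fintype A] (θ : A → ℕ → A) (r : ℕ) : ℕ :=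
  Finset.univ.lcm fun ab : A × A =>
    if IsPeriodicPair θ r ab.1 ab.2 then pairPeriod θ r ab.1 ab.2 else 1

/-- `θ` is pair-aperiodic: every periodic pair has period `1`. -/
def PairAperiodic {A : Type*} (θ : A → ℕ → A) (r : ℕ) : Prop :=
  ∀ a b : A, IsPeriodicPair θ r a b → ∃ j < r, θ a j = a ∧ θ b j = b

/-- `(c, d)` is `k`-reachable from `(a, b)`. -/
def PairReachable {A : Type*} (θ : A → ℕ → A) (r k : ℕ) (a b c d : A) : Prop :=
  ∃ j < r ^ k, substPow θ r k a j = c ∧ substPow θ r k b j = d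

/-- `(a, b)` is an asymptotic disjoint pair. -/
def AsympDisjointPair {A : Type*} (θ : A → ℕ → A) (r : ℕ) (a b : A) : Prop :=
  ∀ k, 1 ≤ k → ∃ j < r ^ k, substPow θ r k a j ≠ substPow θ r k b j

/-- A right-infinite fixed point of `θ`. -/
def IsRightFixed {A : Type*} (θ : A → ℕ → A) (r : ℕ) (u : ℕ → A) : Prop :=
  ∀ n : ℕ, θ (u (n / r)) (n % r) = u n

/-- A left-infinite fixed point of `θ` (only coordinates `< 0` are meaningful). -/
def IsLeftFixed {A : Type*} (θ : A → ℕ → A) (r : ℕ) (v : ℤ → A) : Prop :=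
  ∀ m : ℤ, m < 0 → θ (v (Int.fdiv m r)) ((Int.fmod m r).toNat) = v m

/-- `θ` is injective: distinct letters have distinct images. -/
def SubstInjective {A : Type*} (θ : A → ℕ → A) (r : ℕ) : Prop :=
  ∀ a b : A, (∀ j < r, θ a j = θ b j) → a = b

/-- `θ` is strongly injective: injective, no two distinct right-infinite fixed points agree
on all coordinates `n ≥ 1`, and no two distinct left-infinite fixed points agree on all
coordinates `n ≤ -2`. -/
def StronglyInjective {A : Type*} (θ : A → ℕ → A) (r : ℕ) : Prop :=
  SubstInjective θ r ∧
    (∀ u u' : ℕ → A, IsRightFixed θ r u → IsRightFixed θ r u' →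
      (∀ n, 1 ≤ n → u n = u' n) → u = u') ∧
    (∀ v v' : ℤ → A, IsLeftFixed θ r v → IsLeftFixed θ r v' →
      (∀ m : ℤ, m ≤ -2 → v m = v' m) → ∀ m : ℤ, m < 0 → v m = v' m)

/-- `θ` has height one. -/
def HeightOne {A : Type*} (θ : A → ℕ → A) (r : ℕ) : Prop :=
  ∀ u : ℕ → A, IsRightFixed θ r u →
    ∀ n, 1 ≤ n → Nat.Coprime n r → (∀ a, 1 ≤ a → u a = u 0 → n ∣ a) → n = 1

/-- The column number `c(θ)`. -/
def columnNumber {A : Type*} [Fintype A] (θ : A → ℕ → A) (r : ℕ) : ℕ :=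
  sInf {c | ∃ k, 1 ≤ k ∧ ∃ j < r ^ k,
    c = (Set.range fun a : A => substPow θ r k a j).ncard}

/-- A minimal set for `θ`: a column image of cardinality `c(θ)`. -/
def IsMinimalSet {A : Type*} [Fintype A] (θ : A → ℕ → A) (r : ℕ) (M : Set A) : Prop :=
  M.ncard = columnNumber θ r ∧
    ∃ k, 1 ≤ k ∧ ∃ j < r ^ k, M = Set.range fun a : A => substPow θ r k a j

/-- `d*(θ^k(a), θ^k(b))`: the proportion of coordinates where `θ^k(a)` and `θ^k(b)`
disagree. -/
def dStar {A : Type*} (θ : A → ℕ → A) (r k : ℕ) (a b : A) : ℝ :=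
  (((Finset.range (r ^ k)).filter
      fun j => substPow θ r k a j ≠ substPow θ r k b j).card : ℝ) / ((r : ℝ) ^ k)

/-- `θ` is reduced: for no pair of distinct letters does `d*(θ^k(a), θ^k(b))` tend to `0`. -/
def SubstReduced {A : Type*} (θ : A → ℕ → A) (r : ℕ) : Prop :=
  ∀ a b : A, a ≠ b →
    ¬ Filter.Tendsto (fun k => dStar θ r k a b) Filter.atTop (nhds (0 : ℝ))

/-- `ι : C → (ℕ → B)` presents `C` as the alphabet of `k`-blocks of the fixed point `u`
of `η`, and `ηk` as the `k`-compression `η^{(k)}` of `η`. -/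
def IsCompression {B C : Type*} (η : B → ℕ → B) (r k : ℕ) (u : ℕ → B)
    (ι : C → ℕ → B) (ηk : C → ℕ → C) : Prop :=
  IsRightFixed η r u ∧
    (∀ c c' : C, (∀ j < k, ι c j = ι c' j) → c = c') ∧
    (∀ c : C, ∃ m : ℕ, ∀ j < k, ι c j = u (m * k + j)) ∧
    (∀ m : ℕ, ∃ c : C, ∀ j < k, ι c j = u (m * k + j)) ∧
    (∀ c : C, ∀ i < r, ∀ j < k,
      ι (ηk c i) j = η (ι c ((i * k + j) / r)) ((i * k + j) % r))

/-- The `τ`-twist of a substitution: `(θ_τ(α))_j = τ^j(θ(α)_j)`. -/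
def twistSubst {C : Type*} (θ : C → ℕ → C) (τ : C → C) : C → ℕ → C :=
  fun c j => τ^[j] (θ c j)

end

lemma substPow_add' {A : Type*} (θ : A → ℕ → A) (r : ℕ) :
    ∀ (m k : ℕ) (a : A) (j : ℕ),
      substPow θ r (k + m) a j =
        substPow θ r m (substPow θ r k a (j / r ^ m)) (j % r ^ m) := by
  intro m
  induction m with
  | zero => intro k a j; simp [substPow]
  | succ m ih =>
    intro k a j
    show θ (substPow θ r (k + m) a (j / r)) (j % r) = _
    rw [ih]
    show _ = θ (substPow θ r m (substPow θ r k a (j / r ^ (m+1))) ((j % r ^ (m+1)) / r))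
      ((j % r ^ (m+1)) % r)
    have h1 : j / r / r ^ m = j / r ^ (m + 1) := by
      rw [Nat.div_div_eq_div_mul, ← pow_succ']
    have h2 : (j % r ^ (m+1)) / r = j / r % r ^ m := by
      rw [pow_succ', Nat.mod_mul_right_div_self]
    have h3 : (j % r ^ (m+1)) % r = j % r :=
      Nat.mod_mod_of_dvd j (dvd_pow_self r (Nat.succ_ne_zero m))
    rw [h1, h2, h3]


/-- for a primitive pair-aperiodic substitution, if `(a,b)` with `a ≠ b` is
not an asymptotic disjoint pair, then `θ^{|𝒜|²}(a) = θ^{|𝒜|²}(b)`. -/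
theorem stmt_7 {A : Type*} [Fintype A] (θ : A → ℕ → A) (r : ℕ) (hr : 2 ≤ r)
    (hprim : SubstPrimitive θ r) (hap : PairAperiodic θ r)
    (a b : A) (hab : a ≠ b) (hnd : ¬ AsympDisjointPair θ r a b) :
    ∀ j < r ^ (Fintype.card A ^ 2),
      substPow θ r (Fintype.card A ^ 2) a j =
        substPow θ r (Fintype.card A ^ 2) b j := by
  classical
  by_contra hcon
  push_neg at hcon
  obtain ⟨j, hjlt, hne⟩ := hcon
  apply hnd
  set N := Fintype.card A ^ 2 with hN
  have hr0 : 0 < r := by omega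
  set c : ℕ → A := fun k => substPow θ r k a (j / r ^ (N - k)) with hc
  set d : ℕ → A := fun k => substPow θ r k b (j / r ^ (N - k)) with hd
  have hkey : ∀ x : A, ∀ k ≤ N, substPow θ r N x j
      = substPow θ r (N - k) (substPow θ r k x (j / r ^ (N - k))) (j % r ^ (N - k)) := by
    intro x k hk
    conv_lhs => rw [show N = k + (N - k) by omega]
    exact substPow_add' θ r (N - k) k x j
  have hcd : ∀ k ≤ N, c k ≠ d k := by
    intro k hk h
    apply hne
    rw [hkey a k hk, hkey b k hk]
    simp only [hc, hd] at h
    rw [h]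
  have hjk : ∀ k ≤ N, j / r ^ (N - k) < r ^ k := by
    intro k hk
    apply Nat.div_lt_of_lt_mul
    calc j < r ^ N := hjlt
      _ = r ^ (N - k) * r ^ k := by rw [← pow_add]; congr 1; omega
  -- pigeonhole
  have hcard : Fintype.card (A × A) < Fintype.card (Fin (N + 1)) := by
    rw [Fintype.card_prod, Fintype.card_fin, hN, pow_two]
    omega
  obtain ⟨i0, i1, hne01, hfe⟩ := Fintype.exists_ne_map_eq_of_card_lt
    (fun k : Fin (N + 1) => (c k, d k)) hcard
  simp only [Prod.mk.injEq] at hfe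
  have main : ∀ i i' : ℕ, i < i' → i' ≤ N → c i = c i' → d i = d i' →
      AsympDisjointPair θ r a b := by
    intro i i' hii' hi'N hcc hdd
    have hiN : i ≤ N := by omega
    have hp1 : 1 ≤ i' - i := by omega
    have hJlt : (j / r ^ (N - i')) % r ^ (i' - i) < r ^ (i' - i) :=
      Nat.mod_lt _ (Nat.pow_pos hr0)
    have hch : ∀ x : A, substPow θ r i' x (j / r ^ (N - i'))
        = substPow θ r (i' - i) (substPow θ r i x (j / r ^ (N - i)))
          ((j / r ^ (N - i')) % r ^ (i' - i)) := by
      intro x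
      conv_lhs => rw [show i' = i + (i' - i) by omega]
      rw [substPow_add' θ r (i' - i) i x, show i + (i' - i) = i' by omega]
      congr 2
      rw [Nat.div_div_eq_div_mul, ← pow_add, show N - i' + (i' - i) = N - i by omega]
    have hper : IsPeriodicPair θ r (c i) (d i) := by
      refine ⟨hcd i hiN, i' - i, hp1, _, hJlt, ?_, ?_⟩
      · rw [← hch a]; exact hcc.symm
      · rw [← hch b]; exact hdd.symm
    obtain ⟨j0, hj0, hfc, hfd⟩ := hap _ _ hper
    have hreach : ∀ m, ∃ jj < r ^ (i + m),
        substPow θ r (i + m) a jj = c i ∧ substPow θ r (i + m) b jj = d i := by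
      intro m
      induction m with
      | zero => exact ⟨j / r ^ (N - i), hjk i hiN, rfl, rfl⟩
      | succ m ih =>
        obtain ⟨jj, hjj, ha', hb'⟩ := ih
        have hdivv : (jj * r + j0) / r = jj := by
          rw [mul_comm, Nat.mul_add_div hr0, Nat.div_eq_of_lt hj0, Nat.add_zero]
        have hmodd : (jj * r + j0) % r = j0 := by
          rw [mul_comm jj r, Nat.mul_add_mod, Nat.mod_eq_of_lt hj0]
        refine ⟨jj * r + j0, ?_, ?_, ?_⟩
        · calc jj * r + j0 < jj * r + r := by omega
            _ = (jj + 1) * r := by ring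
            _ ≤ r ^ (i + m) * r := Nat.mul_le_mul_right r hjj
            _ = r ^ (i + m + 1) := (pow_succ r (i + m)).symm
        · show θ (substPow θ r (i + m) a ((jj * r + j0) / r)) ((jj * r + j0) % r) = c i
          rw [hdivv, hmodd, ha', hfc]
        · show θ (substPow θ r (i + m) b ((jj * r + j0) / r)) ((jj * r + j0) % r) = d i
          rw [hdivv, hmodd, hb', hfd]
    intro k hk
    rcases le_or_gt k N with hkN | hkN
    · exact ⟨j / r ^ (N - k), hjk k hkN, hcd k hkN⟩
    · obtain ⟨jj, hjj, ha', hb'⟩ := hreach (k - i)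
      rw [show i + (k - i) = k by omega] at hjj ha' hb'
      refine ⟨jj, hjj, ?_⟩
      rw [ha', hb']
      exact hcd i hiN
  rcases lt_or_gt_of_ne hne01 with h01 | h01
  · exact main i0 i1 h01 (by omega) hfe.1 hfe.2
  · exact main i1 i0 h01 (by omega) hfe.1.symm hfe.2.symm
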